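/- arXiv:1703.09753 — 4 statements merged into one kernel-verified Lean document; each statement's English description precedes it below -/
import Mathlib

section
/- For every n ≥ 1, the complete preimage of 2/3 under the n-th iterate of the tent map equals B_n = { (k + 1/3)/2^{n-1} : 0 ≤ k < 2^{n-1} } ∪ { (k + 2/3)/2^{n-1} : 0 ≤ k < 2^{n-1} }. -/
noncomputable def tent (x : ℝ) : ℝ := 1 - |2 * x - 1|

lemma tent_eq_iff (x y : ℝ) (hy : y ∈ Set.Icc (0:ℝ) 1) :
    tent x = y ↔ x = y/2 ∨ x = 1 - y/2 := by
  have h : tent x = y ↔ |2*x-1| = 1 - y := by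
    unfold tent; constructor <;> intro h <;> linarith
  rw [h, abs_eq (by linarith [hy.2])]
  constructor <;> rintro (h | h)
  · right; linarith
  · left; linarith
  · right; linarith
  · left; linarith

lemma tent_half (y : ℝ) (hy : y ∈ Set.Icc (0:ℝ) 1) : tent (y/2) = y := by
  unfold tent
  have : |2 * (y/2) - 1| = 1 - y := by
    rw [show 2 * (y/2) - 1 = -(1-y) by ring, abs_neg, abs_of_nonneg (by linarith [hy.2])]
  rw [this]; ring

lemma tent_one_sub_half (y : ℝ) (hy : y ∈ Set.Icc (0:ℝ) 1) : tent (1 - y/2) = y := by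
  unfold tent
  have : |2 * (1 - y/2) - 1| = 1 - y := by
    rw [show 2 * (1 - y/2) - 1 = 1 - y by ring, abs_of_nonneg (by linarith [hy.2])]
  rw [this]; ring

lemma ymem (n k : ℕ) (c : ℝ) (hc : 0 ≤ c) (hc1 : c ≤ 1) (hk : k < 2^n) :
    ((k:ℝ)+c)/2^n ∈ Set.Icc (0:ℝ) 1 := by
  have h2 : (0:ℝ) < 2^n := by positivity
  have hk' : (k:ℝ) + 1 ≤ 2^n := by
    have : (k:ℝ) + 1 ≤ (2:ℝ)^n := by exact_mod_cast Nat.succ_le_of_lt hk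
    linarith
  constructor
  · positivity
  · rw [div_le_one h2]; linarith

lemma tent_mem (x : ℝ) (hx : x ∈ Set.Icc (0:ℝ) 1) : tent x ∈ Set.Icc (0:ℝ) 1 := by
  obtain ⟨h0, h1⟩ := hx
  unfold tent
  constructor
  · have : |2*x-1| ≤ 1 := abs_le.mpr ⟨by linarith, by linarith⟩
    linarith
  · have : 0 ≤ |2*x-1| := abs_nonneg _
    linarith

lemma key (n : ℕ) (x : ℝ) :
    (x ∈ Set.Icc (0:ℝ) 1 ∧ tent^[n+1] x = 2/3) ↔
      ((∃ k : ℕ, k < 2^n ∧ x = ((k:ℝ)+1/3)/2^n) ∨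
       (∃ k : ℕ, k < 2^n ∧ x = ((k:ℝ)+2/3)/2^n)) := by
  induction n generalizing x with
  | zero =>
    simp only [zero_add, Function.iterate_one, pow_zero]
    rw [tent_eq_iff x (2/3) (by norm_num)]
    constructor
    · rintro ⟨hx, h | h⟩
      · left; exact ⟨0, by norm_num, by rw [h]; norm_num⟩
      · right; exact ⟨0, by norm_num, by rw [h]; norm_num⟩
    · rintro (⟨k, hk, rfl⟩ | ⟨k, hk, rfl⟩) <;>
        (interval_cases k <;> constructor) <;> norm_num
  | succ n ih =>
    have hiter : tent^[n+2] x = tent^[n+1] (tent x) := Function.iterate_succ_apply tent (n+1) x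
    constructor
    · rintro ⟨hx, hfx⟩
      have h := (ih (tent x)).mp ⟨tent_mem x hx, by rw [← hiter]; exact hfx⟩
      rcases h with ⟨k, hk, hkx⟩ | ⟨k, hk, hkx⟩
      · have hy := ymem n k (1/3) (by norm_num) (by norm_num) hk
        rcases (tent_eq_iff x _ hy).mp hkx with h | h
        · left
          refine ⟨k, lt_of_lt_of_le hk (by omega), ?_⟩
          rw [h, pow_succ]; ring
        · right
          refine ⟨2^(n+1) - 1 - k, by omega, ?_⟩
          have hnat : (2^(n+1) - 1 - k) + k + 1 = 2^(n+1) := by omega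
          have hc : ((2^(n+1) - 1 - k : ℕ) : ℝ) + k + 1 = 2^(n+1) := by exact_mod_cast hnat
          have hc : ((2^(n+1) - 1 - k : ℕ) : ℝ) = 2^(n+1) - 1 - k := by linarith
          rw [h, hc]
          have h2 : (0:ℝ) < 2^n := by positivity
          field_simp
          ring
      · have hy := ymem n k (2/3) (by norm_num) (by norm_num) hk
        rcases (tent_eq_iff x _ hy).mp hkx with h | h
        · right
          refine ⟨k, lt_of_lt_of_le hk (by omega), ?_⟩
          rw [h, pow_succ]; ring
        · left
          refine ⟨2^(n+1) - 1 - k, by omega, ?_⟩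
          have hnat : (2^(n+1) - 1 - k) + k + 1 = 2^(n+1) := by omega
          have hc : ((2^(n+1) - 1 - k : ℕ) : ℝ) + k + 1 = 2^(n+1) := by exact_mod_cast hnat
          have hc : ((2^(n+1) - 1 - k : ℕ) : ℝ) = 2^(n+1) - 1 - k := by linarith
          rw [h, hc]
          have h2 : (0:ℝ) < 2^n := by positivity
          field_simp
          ring
    · rintro (⟨k, hk, rfl⟩ | ⟨k, hk, rfl⟩)
      · rcases lt_or_ge k (2^n) with hlt | hge
        · -- x = ((k+1/3)/2^n)/2
          have hy := ymem n k (1/3) (by norm_num) (by norm_num) hlt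
          have hxeq : ((k:ℝ)+1/3)/2^(n+1) = (((k:ℝ)+1/3)/2^n)/2 := by
            rw [pow_succ]; ring
          rw [hxeq]
          refine ⟨⟨by positivity, by nlinarith [hy.1, hy.2]⟩, ?_⟩
          rw [Function.iterate_succ_apply, tent_half _ hy]
          exact ((ih _).mpr (Or.inl ⟨k, hlt, rfl⟩)).2
        · -- x = 1 - y/2 with y = (k'+2/3)/2^n, k' = 2^(n+1)-1-k
          set k' : ℕ := 2^(n+1) - 1 - k with hk'
          have hk'lt : k' < 2^n := by omega
          have hy := ymem n k' (2/3) (by norm_num) (by norm_num) hk'lt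
          have hnat : k' + k + 1 = 2^(n+1) := by omega
          have hc0 : (k':ℝ) + k + 1 = 2^(n+1) := by exact_mod_cast hnat
          have hcast : (k':ℝ) = 2^(n+1) - 1 - k := by linarith
          have hxeq : ((k:ℝ)+1/3)/2^(n+1) = 1 - (((k':ℝ)+2/3)/2^n)/2 := by
            rw [hcast]
            have h2 : (0:ℝ) < 2^n := by positivity
            field_simp
            ring
          rw [hxeq]
          refine ⟨⟨by linarith [hy.2, hy.1, (div_nonneg hy.1 (by norm_num : (0:ℝ) ≤ 2))], by linarith [div_nonneg hy.1 (by norm_num : (0:ℝ) ≤ 2)]⟩, ?_⟩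
          rw [Function.iterate_succ_apply, tent_one_sub_half _ hy]
          exact ((ih _).mpr (Or.inr ⟨k', hk'lt, rfl⟩)).2
      · rcases lt_or_ge k (2^n) with hlt | hge
        · have hy := ymem n k (2/3) (by norm_num) (by norm_num) hlt
          have hxeq : ((k:ℝ)+2/3)/2^(n+1) = (((k:ℝ)+2/3)/2^n)/2 := by
            rw [pow_succ]; ring
          rw [hxeq]
          refine ⟨⟨by positivity, by nlinarith [hy.1, hy.2]⟩, ?_⟩
          rw [Function.iterate_succ_apply, tent_half _ hy]
          exact ((ih _).mpr (Or.inr ⟨k, hlt, rfl⟩)).2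
        · set k' : ℕ := 2^(n+1) - 1 - k with hk'
          have hk'lt : k' < 2^n := by omega
          have hy := ymem n k' (1/3) (by norm_num) (by norm_num) hk'lt
          have hnat : k' + k + 1 = 2^(n+1) := by omega
          have hc0 : (k':ℝ) + k + 1 = 2^(n+1) := by exact_mod_cast hnat
          have hcast : (k':ℝ) = 2^(n+1) - 1 - k := by linarith
          have hxeq : ((k:ℝ)+2/3)/2^(n+1) = 1 - (((k':ℝ)+1/3)/2^n)/2 := by
            rw [hcast]
            have h2 : (0:ℝ) < 2^n := by positivity
            field_simp
            ring
          rw [hxeq]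
          refine ⟨⟨by linarith [hy.2, div_nonneg hy.1 (by norm_num : (0:ℝ) ≤ 2)], by linarith [div_nonneg hy.1 (by norm_num : (0:ℝ) ≤ 2)]⟩, ?_⟩
          rw [Function.iterate_succ_apply, tent_one_sub_half _ hy]
          exact ((ih _).mpr (Or.inl ⟨k', hk'lt, rfl⟩)).2

theorem tent_preimage_two_thirds (n : ℕ) (hn : 1 ≤ n) :
    {x : ℝ | x ∈ Set.Icc (0:ℝ) 1 ∧ tent^[n] x = 2/3} =
      {x : ℝ | ∃ k : ℕ, k < 2 ^ (n - 1) ∧ x = ((k : ℝ) + 1/3) / 2 ^ (n - 1)} ∪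
      {x : ℝ | ∃ k : ℕ, k < 2 ^ (n - 1) ∧ x = ((k : ℝ) + 2/3) / 2 ^ (n - 1)} := by
  obtain ⟨m, rfl⟩ := Nat.exists_eq_add_of_le hn
  ext x
  simp only [Set.mem_setOf_eq, Set.mem_union]
  have : 1 + m - 1 = m := by omega
  rw [this, show 1 + m = m + 1 by omega]
  exact key m x
end

section
/- For every n ≥ 1, the set F_n of points mapped by f^n to a fixed point of f equals { (k + κ)/2^{n-1} : 0 ≤ k < 2^{n-1}, κ ∈ {0, 1/3, 2/3} } ∪ {1}. -/
/-! Write `ℤ` for the integers inside `ℝ` (`zmultiples (1 : ℝ)` below). Since `tent x` is `2x` or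
`2 - 2x`, for an integer `N` we have `N · tent x ∈ ℤ ↔ 2N · x ∈ ℤ`, hence
`N · tentⁿ x ∈ ℤ ↔ 2ⁿN · x ∈ ℤ`. The fixed points `0, 2/3` have preimages `0, 1/3, 2/3, 1`, i.e.
the `y ∈ [0, 1]` with `3y ∈ ℤ`. So `F_{m+1}` is the set of `x ∈ [0, 1]` with `3 · 2ᵐ · x ∈ ℤ`, and
dividing `3 · 2ᵐ · x` by `3` with remainder gives the normal form `(k + κ) / 2ᵐ`. -/

open AddSubgroup Function Set

lemma tent_eq_two_mul_or_two_sub (x : ℝ) : tent x = 2 * x ∨ tent x = 2 - 2 * x := by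
  rcases abs_choice (2 * x - 1) with h | h <;> rw [tent, h]
  · exact Or.inr (by ring)
  · exact Or.inl (by ring)

lemma mapsTo_tent_Icc : MapsTo tent (Icc 0 1) (Icc 0 1) := fun _ ⟨h0, h1⟩ =>
  ⟨sub_nonneg.2 (abs_le.2 ⟨by linarith, by linarith⟩), sub_le_self _ (abs_nonneg _)⟩

lemma intCast_mul_tent_mem_zmultiples_one_iff (N : ℤ) (x : ℝ) :
    N * tent x ∈ zmultiples (1 : ℝ) ↔ 2 * N * x ∈ zmultiples (1 : ℝ) := by
  rcases tent_eq_two_mul_or_two_sub x with h | h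
  · rw [h, mul_left_comm, mul_assoc]
  · rw [h, show (N : ℝ) * (2 - 2 * x) = ((2 * N : ℤ) : ℝ) - 2 * N * x by push_cast; ring,
      sub_eq_add_neg, add_mem_cancel_left (intCast_mem_zmultiples_one _), neg_mem_iff]

lemma intCast_mul_tent_iterate_mem_zmultiples_one_iff (N : ℤ) (n : ℕ) (x : ℝ) :
    N * tent^[n] x ∈ zmultiples (1 : ℝ) ↔ 2 ^ n * N * x ∈ zmultiples (1 : ℝ) := by
  induction n generalizing N with
  | zero => simp
  | succ n ih =>
    rw [iterate_succ_apply', intCast_mul_tent_mem_zmultiples_one_iff,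
      show (2 : ℝ) * N = ((2 * N : ℤ) : ℝ) by push_cast; rfl, ih, pow_succ]
    push_cast
    ring_nf

lemma tent_mem_zero_twoThirds_iff {y : ℝ} (hy : y ∈ Icc 0 1) :
    tent y ∈ ({0, 2/3} : Set ℝ) ↔ 3 * y ∈ zmultiples (1 : ℝ) := by
  simp only [mem_insert_iff, mem_singleton_iff, mem_zmultiples_iff, zsmul_one]
  constructor
  · rintro (h | h) <;> rcases tent_eq_two_mul_or_two_sub y with h' | h'
    · exact ⟨0, by push_cast; linarith⟩
    · exact ⟨3, by push_cast; linarith⟩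
    · exact ⟨1, by push_cast; linarith⟩
    · exact ⟨2, by push_cast; linarith⟩
  · rintro ⟨j, hj⟩
    have h0 : 0 ≤ j := by exact_mod_cast (by linarith [hy.1] : (0 : ℝ) ≤ j)
    have h3 : j ≤ 3 := by exact_mod_cast (by linarith [hy.2] : (j : ℝ) ≤ 3)
    obtain rfl : y = j / 3 := by linarith
    interval_cases j <;> norm_num [tent, abs_of_nonneg, abs_of_nonpos]

lemma exists_thirds_of_three_mul_mem_zmultiples_one {M : ℕ} (hM : 0 < M) {x : ℝ}
    (hx : x ∈ Icc 0 1) (hxM : 3 * M * x ∈ zmultiples (1 : ℝ)) (hx1 : x ≠ 1) :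
    ∃ k : ℕ, k < M ∧ ∃ κ ∈ ({0, 1/3, 2/3} : Set ℝ), x = (k + κ) / M := by
  obtain ⟨j, hj⟩ := mem_zmultiples_iff.1 hxM
  rw [zsmul_one] at hj
  lift j to ℕ using by exact_mod_cast (by nlinarith [hx.1] : (0 : ℝ) ≤ j)
  rw [Int.cast_natCast] at hj
  have hj3M : j < 3 * M := by
    have : (0 : ℝ) < M := by exact_mod_cast hM
    have : (j : ℝ) < 3 * M := by nlinarith [lt_of_le_of_ne hx.2 hx1]
    exact_mod_cast this
  refine ⟨j / 3, by omega, (j % 3 : ℕ) / 3, ?_, ?_⟩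
  · have : j % 3 = 0 ∨ j % 3 = 1 ∨ j % 3 = 2 := by omega
    rcases this with h | h | h <;> simp [h]
  · have hdiv : ((j / 3 : ℕ) : ℝ) + (j % 3 : ℕ) / 3 = j / 3 := by
      rw [eq_div_iff three_ne_zero, add_mul, div_mul_cancel₀ _ three_ne_zero]
      exact_mod_cast (by omega : j / 3 * 3 + j % 3 = j)
    rw [hdiv, hj]
    field_simp

lemma mem_Icc_and_three_mul_mem_zmultiples_one_of_thirds {M k : ℕ} (hk : k < M) {κ : ℝ}
    (hκ : κ ∈ ({0, 1/3, 2/3} : Set ℝ)) :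
    (k + κ) / M ∈ Icc (0 : ℝ) 1 ∧ 3 * M * ((k + κ) / M) ∈ zmultiples (1 : ℝ) := by
  have hkM : (k : ℝ) + 1 ≤ M := by exact_mod_cast hk
  have hM : (0 : ℝ) < M := by linarith [(Nat.cast_nonneg k : (0 : ℝ) ≤ k)]
  obtain ⟨hκ0, hκ1⟩ : 0 ≤ κ ∧ κ ≤ 2/3 := by rcases hκ with rfl | rfl | rfl <;> norm_num
  obtain ⟨j, hj⟩ : ∃ j : ℤ, 3 * κ = j := by
    rcases hκ with rfl | rfl | rfl
    exacts [⟨0, by norm_num⟩, ⟨1, by norm_num⟩, ⟨2, by norm_num⟩]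
  refine ⟨⟨div_nonneg (by linarith [(Nat.cast_nonneg k : (0 : ℝ) ≤ k)]) hM.le,
    (div_le_one hM).2 (by linarith)⟩, ?_⟩
  rw [show 3 * (M : ℝ) * ((k + κ) / M) = 3 * k + 3 * κ by field_simp, hj]
  exact_mod_cast intCast_mem_zmultiples_one (R := ℝ) (3 * k + j)

lemma setOf_mem_Icc_three_mul_mem_zmultiples_one {M : ℕ} (hM : 0 < M) :
    {x : ℝ | x ∈ Icc 0 1 ∧ 3 * M * x ∈ zmultiples (1 : ℝ)} =
      {x : ℝ | ∃ k : ℕ, k < M ∧ ∃ κ ∈ ({0, 1/3, 2/3} : Set ℝ), x = (k + κ) / M} ∪ {1} := by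
  ext x
  constructor
  · rintro ⟨hx, hxM⟩
    by_cases hx1 : x = 1
    · exact Or.inr hx1
    · exact Or.inl (exists_thirds_of_three_mul_mem_zmultiples_one hM hx hxM hx1)
  · rintro (⟨k, hk, κ, hκ, rfl⟩ | rfl)
    · exact mem_Icc_and_three_mul_mem_zmultiples_one_of_thirds hk hκ
    · exact ⟨⟨zero_le_one, le_rfl⟩, by simpa using intCast_mem_zmultiples_one (R := ℝ) (3 * M)⟩

theorem tent_preimage_fixed_points (n : ℕ) (hn : 1 ≤ n) :
    {x : ℝ | x ∈ Set.Icc (0:ℝ) 1 ∧ tent^[n] x ∈ ({0, 2/3} : Set ℝ)} =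
      {x : ℝ | ∃ k : ℕ, k < 2 ^ (n - 1) ∧
        ∃ κ ∈ ({0, 1/3, 2/3} : Set ℝ), x = ((k : ℝ) + κ) / 2 ^ (n - 1)} ∪ {1} := by
  obtain ⟨m, rfl⟩ : ∃ m, n = m + 1 := ⟨n - 1, by omega⟩
  have hF := setOf_mem_Icc_three_mul_mem_zmultiples_one (Nat.two_pow_pos m)
  push_cast at hF
  rw [Nat.add_sub_cancel, ← hF]
  ext x
  simp only [mem_ofPred_eq, iterate_succ_apply']
  refine and_congr_right fun hx => ?_
  rw [tent_mem_zero_twoThirds_iff (mapsTo_tent_Icc.iterate m hx)]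
  simpa [mul_comm] using intCast_mul_tent_iterate_mem_zmultiples_one_iff 3 m x
end

section
/- For every k ∈ ℕ with k ≥ 1, the piecewise linear map ξ(x) = (1 - (-1)^⌊kx⌋)/2 + (-1)^⌊kx⌋·{kx} (where {·} is the fractional part and ⌊·⌋ the floor) satisfies ξ ∘ f = f ∘ ξ for the tent map f. -/
/-- The piecewise linear map ξ_k(x) = (1 - (-1)^⌊kx⌋)/2 + (-1)^⌊kx⌋·{kx}. -/
noncomputable def xi (k : ℕ) (x : ℝ) : ℝ :=
  (1 - (-1 : ℝ) ^ ⌊(k : ℝ) * x⌋) / 2 + (-1 : ℝ) ^ ⌊(k : ℝ) * x⌋ * Int.fract ((k : ℝ) * x)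

/-- The period-2 triangle wave. -/
noncomputable def G (y : ℝ) : ℝ := 2 * min (Int.fract (y / 2)) (1 - Int.fract (y / 2))

lemma G_add_two_int (y : ℝ) (m : ℤ) : G (y + 2 * m) = G y := by
  unfold G
  rw [show (y + 2 * m) / 2 = y / 2 + m by ring, Int.fract_add_intCast]

lemma G_neg (y : ℝ) : G (-y) = G y := by
  unfold G
  by_cases h : Int.fract (y / 2) = 0
  · rw [show (-y) / 2 = -(y / 2) by ring, Int.fract_neg_eq_zero.mpr h, h]
  · rw [show (-y) / 2 = -(y / 2) by ring, Int.fract_neg h, min_comm]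
    ring_nf

lemma G_of_mem {y : ℝ} (h : y ∈ Set.Icc (0:ℝ) 1) : G y = y := by
  obtain ⟨h0, h1⟩ := h
  have hf : Int.fract (y / 2) = y / 2 := Int.fract_eq_self.mpr ⟨by linarith, by linarith⟩
  unfold G
  rw [hf, min_eq_left (by linarith)]
  ring

lemma G_mem (y : ℝ) : G y ∈ Set.Icc (0:ℝ) 1 := by
  have h0 := Int.fract_nonneg (y / 2)
  have h1 := Int.fract_lt_one (y / 2)
  constructor
  · have : (0:ℝ) ≤ min (Int.fract (y / 2)) (1 - Int.fract (y / 2)) :=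
      le_min h0 (by linarith)
    unfold G; linarith
  · rcases le_total (Int.fract (y / 2)) (1/2) with h | h
    · have := min_le_left (Int.fract (y / 2)) (1 - Int.fract (y / 2))
      unfold G; linarith
    · have := min_le_right (Int.fract (y / 2)) (1 - Int.fract (y / 2))
      unfold G; linarith

lemma G_comp (k : ℕ) (z : ℝ) : G ((k : ℝ) * G z) = G ((k : ℝ) * z) := by
  set m : ℤ := ⌊z / 2⌋ with hm
  set w : ℝ := z - 2 * m with hw
  have hz : z = w + 2 * m := by rw [hw]; ring
  have hw0 : 0 ≤ w := by
    have := Int.floor_le (z / 2); rw [hw]; linarith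
  have hw2 : w < 2 := by
    have := Int.lt_floor_add_one (z / 2); rw [hw]; linarith
  have hGz : G z = G w := by rw [hz, G_add_two_int]
  have hGkz : G ((k : ℝ) * z) = G ((k : ℝ) * w) := by
    rw [hz, show (k : ℝ) * (w + 2 * m) = (k : ℝ) * w + 2 * ((k : ℤ) * m : ℤ) by
      push_cast; ring, G_add_two_int]
  rw [hGz, hGkz]
  rcases le_total w 1 with h1 | h1
  · rw [G_of_mem ⟨hw0, h1⟩]
  · have hGw : G w = 2 - w := by
      have e2 : G w = G (2 - w) := by
        rw [← G_neg (2 - w), show -(2 - w) = w + 2 * ((-1:ℤ):ℝ) by push_cast; ring,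
          G_add_two_int]
      rw [e2, G_of_mem ⟨by linarith, by linarith⟩]
    rw [hGw, show (k : ℝ) * (2 - w) = -((k:ℝ) * w) + 2 * (k : ℤ) by push_cast; ring,
      G_add_two_int, G_neg]

lemma tent_eq {x : ℝ} (h : x ∈ Set.Icc (0:ℝ) 1) : tent x = G (2 * x) := by
  obtain ⟨h0, h1⟩ := h
  unfold tent
  rcases le_total x (1/2) with hx | hx
  · rw [abs_of_nonpos (by linarith), G_of_mem ⟨by linarith, by linarith⟩]
    ring
  · rw [abs_of_nonneg (by linarith),
      show (2:ℝ) * x = -(2 - 2 * x) + 2 * (1:ℤ) by push_cast; ring,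
      G_add_two_int, G_neg, G_of_mem ⟨by linarith, by linarith⟩]
    ring

lemma xi_eq (k : ℕ) (x : ℝ) : xi k x = G ((k : ℝ) * x) := by
  set n : ℤ := ⌊(k : ℝ) * x⌋ with hn
  set t : ℝ := Int.fract ((k : ℝ) * x) with ht
  have ht0 : 0 ≤ t := Int.fract_nonneg _
  have ht1 : t < 1 := Int.fract_lt_one _
  have hkx : (k : ℝ) * x = n + t := by rw [ht, hn]; exact (Int.floor_add_fract _).symm
  rcases Int.even_or_odd n with ⟨m, hm⟩ | ⟨m, hm⟩
  · have hpow : (-1 : ℝ) ^ n = 1 := Even.neg_one_zpow ⟨m, hm⟩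
    have hfr : Int.fract ((k : ℝ) * x / 2) = t / 2 := by
      rw [hkx, hm, show ((m + m : ℤ) + t) / 2 = t / 2 + m by push_cast; ring,
        Int.fract_add_intCast, Int.fract_eq_self.mpr ⟨by linarith, by linarith⟩]
    unfold xi G
    rw [← hn, ← ht, hpow, hfr, min_eq_left (by linarith)]
    ring
  · have hpow : (-1 : ℝ) ^ n = -1 := Odd.neg_one_zpow ⟨m, hm⟩
    have hfr : Int.fract ((k : ℝ) * x / 2) = (1 + t) / 2 := by
      rw [hkx, hm, show (((2 * m + 1 : ℤ)) + t) / 2 = (1 + t) / 2 + m by push_cast; ring,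
        Int.fract_add_intCast, Int.fract_eq_self.mpr ⟨by linarith, by linarith⟩]
    unfold xi G
    rw [← hn, ← ht, hpow, hfr, min_eq_right (by linarith)]
    ring

theorem xi_commutes (k : ℕ) (hk : 1 ≤ k) :
    ∀ x ∈ Set.Icc (0:ℝ) 1, xi k (tent x) = tent (xi k x) := by
  intro x hx
  have htm : tent x ∈ Set.Icc (0:ℝ) 1 := by rw [tent_eq hx]; exact G_mem _
  rw [xi_eq, xi_eq, tent_eq hx, tent_eq (G_mem ((k:ℝ) * x))]
  calc G ((k : ℝ) * G (2 * x)) = G ((k : ℝ) * (2 * x)) := G_comp k _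
    _ = G (((2:ℕ) : ℝ) * ((k : ℝ) * x)) := by push_cast; ring_nf
    _ = G (((2:ℕ) : ℝ) * G ((k : ℝ) * x)) := (G_comp 2 _).symm
    _ = G (2 * G ((k : ℝ) * x)) := by norm_num
end

section
/- Fix n ≥ 1, α ∈ A_n \ A_{n-1} and β ∈ A_n, say α = (2s+1)/2^{n-1} and β = p/2^{n-1}. Then there exists k₀ with 0 ≤ k₀ < 2^n such that for every k ∈ ℕ, the map ξ_k(x) = (1 - (-1)^⌊kx⌋)/2 + (-1)^⌊kx⌋·{kx} satisfies ξ_k(α) = β if and only if k ≡ k₀ (mod 2^n) or k ≡ -k₀ (mod 2^n). -/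
noncomputable def A (n : ℕ) : Set ℝ :=
  {x : ℝ | x ∈ Set.Icc (0:ℝ) 1 ∧ tent^[n] x = 0}

/-- The triangle wave of period 2. -/
noncomputable def tri (u : ℝ) : ℝ :=
  (1 - (-1 : ℝ) ^ ⌊u⌋) / 2 + (-1 : ℝ) ^ ⌊u⌋ * Int.fract u

lemma xi_eq_tri (k : ℕ) (x : ℝ) : xi k x = tri ((k : ℝ) * x) := rfl

lemma tri_add_two_int (u : ℝ) (m : ℤ) : tri (u + 2 * m) = tri u := by
  unfold tri
  have h1 : ⌊u + 2 * (m:ℝ)⌋ = ⌊u⌋ + 2 * m := by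
    rw [show ((2:ℝ) * m) = ((2*m : ℤ) : ℝ) by push_cast; ring, Int.floor_add_intCast]
  have h2 : Int.fract (u + 2 * (m:ℝ)) = Int.fract u := by
    rw [show ((2:ℝ) * m) = ((2*m : ℤ) : ℝ) by push_cast; ring, Int.fract_add_intCast]
  have h3 : (-1:ℝ) ^ (⌊u⌋ + 2*m) = (-1:ℝ)^⌊u⌋ := by
    rw [zpow_add₀ (by norm_num : (-1:ℝ) ≠ 0), zpow_mul]
    norm_num
  rw [h1, h2, h3]

lemma neg_one_zpow_self_inv (a : ℤ) : ((-1:ℝ)^a)⁻¹ = (-1:ℝ)^a := by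
  have h : (-1:ℝ)^a * (-1:ℝ)^a = 1 := by
    rw [← mul_zpow]; norm_num
  exact inv_eq_of_mul_eq_one_right h

lemma tri_neg (u : ℝ) : tri (-u) = tri u := by
  unfold tri
  by_cases h : Int.fract u = 0
  · have hu : (⌊u⌋ : ℝ) = u := by
      have := Int.fract_add_floor u
      rw [h] at this; linarith
    have h1 : ⌊-u⌋ = -⌊u⌋ := by
      rw [show -u = ((-⌊u⌋ : ℤ) : ℝ) by push_cast; linarith, Int.floor_intCast]
    have h2 : Int.fract (-u) = 0 := by
      rw [show -u = ((-⌊u⌋ : ℤ) : ℝ) by push_cast; linarith, Int.fract_intCast]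
    have h3 : (-1:ℝ) ^ (-⌊u⌋) = (-1:ℝ) ^ ⌊u⌋ := by
      rw [zpow_neg, neg_one_zpow_self_inv]
    rw [h1, h2, h, h3]
  · have h1 : Int.fract (-u) = 1 - Int.fract u := Int.fract_neg h
    have hfl : (⌊u⌋ : ℝ) ≤ u := Int.floor_le u
    have hfu : u < ⌊u⌋ + 1 := Int.lt_floor_add_one u
    have hpos : 0 < Int.fract u := (Int.fract_nonneg u).lt_of_ne (Ne.symm h)
    have hfr : Int.fract u = u - ⌊u⌋ := (Int.self_sub_floor u).symm
    have hceil : ⌈u⌉ = ⌊u⌋ + 1 := by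
      rw [Int.ceil_eq_iff]
      push_cast
      constructor <;> [linarith; linarith]
    have hfloor : ⌊-u⌋ = -⌊u⌋ - 1 := by
      rw [Int.floor_neg, hceil]; ring
    have h3 : (-1:ℝ) ^ (-⌊u⌋ - 1) = -((-1:ℝ) ^ ⌊u⌋) := by
      rw [show -⌊u⌋ - 1 = -(⌊u⌋ + 1) by ring, zpow_neg, zpow_add₀ (by norm_num : (-1:ℝ) ≠ 0),
        zpow_one, mul_inv, neg_one_zpow_self_inv]
      norm_num
    rw [h1, hfloor, h3]
    ring

lemma tri_of_mem (β : ℝ) (h0 : 0 ≤ β) (h1 : β ≤ 1) : tri β = β := by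
  rcases lt_or_eq_of_le h1 with h1' | h1'
  · have hf : ⌊β⌋ = 0 := Int.floor_eq_zero_iff.2 ⟨h0, h1'⟩
    have : Int.fract β = β := Int.fract_eq_self.2 ⟨h0, h1'⟩
    rw [tri, hf, this]; norm_num
  · subst h1'
    rw [tri, show ⌊(1:ℝ)⌋ = 1 from Int.floor_one, Int.fract_one]
    norm_num

lemma tri_eq_iff (u β : ℝ) (h0 : 0 ≤ β) (h1 : β ≤ 1) :
    tri u = β ↔ ∃ m : ℤ, u = β + 2 * m ∨ u = -β + 2 * m := by
  constructor
  · intro h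
    rcases Int.even_or_odd ⌊u⌋ with ⟨r, hr⟩ | ⟨r, hr⟩
    · have he : (-1:ℝ) ^ ⌊u⌋ = 1 := by
        rw [hr, show r + r = 2 * r by ring, zpow_mul]; norm_num
      rw [tri, he] at h
      refine ⟨r, Or.inl ?_⟩
      have hu : u = ⌊u⌋ + Int.fract u := (Int.floor_add_fract u).symm
      rw [hu, hr]
      push_cast
      linarith [h]
    · have he : (-1:ℝ) ^ ⌊u⌋ = -1 := by
        rw [hr, zpow_add₀ (by norm_num : (-1:ℝ) ≠ 0), zpow_mul]
        norm_num
      rw [tri, he] at h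
      refine ⟨r + 1, Or.inr ?_⟩
      have hu : u = ⌊u⌋ + Int.fract u := (Int.floor_add_fract u).symm
      rw [hu, hr]
      push_cast
      linarith [h]
  · rintro ⟨m, h | h⟩
    · rw [h, tri_add_two_int, tri_of_mem β h0 h1]
    · rw [h, tri_add_two_int, show -β = -(β) from rfl, tri_neg, tri_of_mem β h0 h1]

theorem xi_k_hits_beta_iff_mod (n : ℕ) (hn : 1 ≤ n) (s p : ℕ) (α β : ℝ)
    (hα : α = (2 * (s : ℝ) + 1) / 2 ^ (n - 1))
    (hβ : β = (p : ℝ) / 2 ^ (n - 1))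
    (hαA : α ∈ A n \ A (n - 1)) (hβA : β ∈ A n) :
    ∃ k₀ : ℕ, k₀ < 2 ^ n ∧ ∀ k : ℕ, 1 ≤ k →
      (xi k α = β ↔ (k % 2 ^ n = k₀ % 2 ^ n ∨ (k + k₀) % 2 ^ n = 0)) := by
  haveI : NeZero (2 ^ n) := ⟨by positivity⟩
  obtain ⟨⟨hβ0, hβ1⟩, -⟩ := hβA
  have hodd : Odd (2 * s + 1) := ⟨s, by ring⟩
  have hcop : Nat.Coprime (2 * s + 1) (2 ^ n) :=
    Nat.Coprime.pow_right _ (Nat.coprime_two_right.2 hodd)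
  obtain ⟨u, hu⟩ := (ZMod.isUnit_iff_coprime (2 * s + 1) (2 ^ n)).2 hcop
  set x : ZMod (2 ^ n) := (p : ZMod (2 ^ n)) * ↑u⁻¹ with hxdef
  refine ⟨x.val, ZMod.val_lt x, fun k _ => ?_⟩
  have hD : (0:ℝ) < 2 ^ (n - 1) := by positivity
  have h2n : (2:ℝ) ^ (n - 1) * 2 = 2 ^ n := by
    rw [← pow_succ]; congr 1; omega
  -- Bridge: real equation ↔ integer equation
  have bridge : ∀ q m : ℤ, ((k:ℝ) * α = (q:ℝ) / 2 ^ (n-1) + 2 * m ↔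
      (k : ℤ) * (2 * s + 1) = q + 2 ^ n * m) := by
    intro q m
    rw [hα, ← mul_div_assoc]
    have hrhs : (q:ℝ)/2^(n-1) + 2*m = ((q:ℝ) + 2^n * m)/2^(n-1) := by
      rw [add_div, ← h2n]
      congr 1
      field_simp
    rw [hrhs, div_left_inj' (ne_of_gt hD)]
    constructor
    · intro h; exact_mod_cast h
    · intro h; exact_mod_cast h
  -- each disjunct ↔ a congruence mod 2^n
  have conv1 : ∀ q : ℤ, (∃ m : ℤ, (k:ℝ) * α = (q:ℝ)/2^(n-1) + 2*m) ↔
      (k : ℤ) * (2 * s + 1) ≡ q [ZMOD ((2^n : ℕ) : ℤ)] := by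
    intro q
    constructor
    · rintro ⟨m, h⟩
      have h' := (bridge q m).1 h
      refine Int.modEq_iff_dvd.2 ⟨-m, ?_⟩
      push_cast
      linarith
    · intro h
      obtain ⟨c, hc⟩ := Int.modEq_iff_dvd.1 h
      refine ⟨-c, (bridge q (-c)).2 ?_⟩
      push_cast
      push_cast at hc
      linarith
  have main : xi k α = β ↔ ((k : ZMod (2^n)) = x ∨ (k : ZMod (2^n)) = -x) := by
    rw [xi_eq_tri, tri_eq_iff _ _ hβ0 hβ1]
    have hb1 : β = (((p:ℤ)):ℝ)/2^(n-1) := by rw [hβ]; norm_num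
    have hb2 : -β = (((-(p:ℤ)):ℤ):ℝ)/2^(n-1) := by rw [hβ]; push_cast; ring
    rw [show (∃ m : ℤ, (↑k * α = β + 2 * ↑m ∨ ↑k * α = -β + 2 * ↑m)) ↔
        ((∃ m : ℤ, (k:ℝ) * α = (((p:ℤ)):ℝ)/2^(n-1) + 2*m) ∨
         (∃ m : ℤ, (k:ℝ) * α = (((-(p:ℤ)):ℤ):ℝ)/2^(n-1) + 2*m)) from by
      rw [← hb1, ← hb2, exists_or]]
    rw [conv1 (p:ℤ), conv1 (-(p:ℤ))]
    rw [← ZMod.intCast_eq_intCast_iff, ← ZMod.intCast_eq_intCast_iff]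
    have hcast : (((k : ℤ) * (2 * s + 1) : ℤ) : ZMod (2^n)) =
        (k : ZMod (2^n)) * (((2*s+1 : ℕ)) : ZMod (2^n)) := by push_cast; ring
    have hp1 : (((p:ℤ)) : ZMod (2^n)) = (p : ZMod (2^n)) := by push_cast; rfl
    have hp2 : (((-(p:ℤ)) : ℤ) : ZMod (2^n)) = -(p : ZMod (2^n)) := by push_cast; rfl
    rw [hcast, hp1, hp2, ← hu]
    have e1 : ((k : ZMod (2^n)) * ↑u = (p : ZMod (2^n))) ↔ ((k : ZMod (2^n)) = x) :=
      (Units.eq_mul_inv_iff_mul_eq u).symm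
    have e2 : ((k : ZMod (2^n)) * ↑u = -(p : ZMod (2^n))) ↔ ((k : ZMod (2^n)) = -x) := by
      rw [hxdef, ← neg_mul]
      exact (Units.eq_mul_inv_iff_mul_eq u).symm
    exact or_congr e1 e2
  have hxval : ((x.val : ℕ) : ZMod (2^n)) = x := ZMod.natCast_rightInverse x
  rw [main]
  constructor
  · rintro (h | h)
    · left
      have hk : (k : ZMod (2^n)) = ((x.val : ℕ) : ZMod (2^n)) := by rw [hxval]; exact h
      exact (ZMod.natCast_eq_natCast_iff _ _ _).1 hk
    · right
      have hz : ((k + x.val : ℕ) : ZMod (2^n)) = 0 := by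
        rw [Nat.cast_add, hxval, h]; ring
      have hdvd := (ZMod.natCast_eq_zero_iff _ _).1 hz
      omega
  · rintro (h | h)
    · left
      rw [← hxval]
      exact (ZMod.natCast_eq_natCast_iff _ _ _).2 h
    · right
      have hdvd : 2^n ∣ k + x.val := Nat.dvd_of_mod_eq_zero h
      have hz : ((k + x.val : ℕ) : ZMod (2^n)) = 0 :=
        (ZMod.natCast_eq_zero_iff _ _).2 hdvd
      rw [Nat.cast_add, hxval] at hz
      exact eq_neg_of_add_eq_zero_left hz
end
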